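/- arXiv:1301.1717 — 6 statements merged into one kernel-verified Lean document; each statement's English description precedes it below -/
import Mathlib

section
/- Let G be a group acting on a sample space Ω_X and on an action space Ω_A, let γ : G → Ω_A → ℝ be an invariant loss and δ : Ω_X → Ω_A an equivariant decision rule. Fix x ∈ Ω_X, let S = {u ∈ Ω_X : ∃ g ∈ G, x = g • u} be the orbit of x, and let s : Ω_X → G be a (measurable) selection satisfying x = s(u) • u for every u ∈ S. Then γ(1, δ(u)) = γ(s(u), δ(x)) for every u ∈ S, and hence for every measure κ on Ω_X concentrated on S (i.e. κ(Ω_X \ S) = 0) one has ∫ γ(1, δ(u)) dκ(u) = ∫ γ(s(u), δ(x)) dκ(u). Thus the conditional risk of an equivariant rule is determined by the fiducial distribution, namely the law of u ↦ s(u) under κ. -/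
open MeasureTheory

lemma loss_one_eq_of_eq_smul {G X A β : Type*} [Group G] [MulAction G X] [MulAction G A]
    {γ : G → A → β} {δ : X → A}
    (hγ : ∀ (g θ : G) (a : A), γ (g * θ) (g • a) = γ θ a)
    (hδ : ∀ (g : G) (x : X), δ (g • x) = g • δ x)
    {x u : X} {g : G} (h : x = g • u) :
    γ 1 (δ u) = γ g (δ x) := by
  rw [h, hδ, ← hγ g 1, mul_one]

theorem risk_determined_by_fiducial_general {G ΩX ΩA : Type*} [Group G]
    [MulAction G ΩX] [MulAction G ΩA] [MeasurableSpace ΩX]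
    (γ : G → ΩA → ℝ) (δ : ΩX → ΩA)
    (hγ : ∀ (g θ : G) (a : ΩA), γ (g * θ) (g • a) = γ θ a)
    (hδ : ∀ (g : G) (x : ΩX), δ (g • x) = g • δ x)
    (x : ΩX) (S : Set ΩX)
    (s : ΩX → G) (hs : ∀ u ∈ S, x = s u • u) :
    (∀ u ∈ S, γ 1 (δ u) = γ (s u) (δ x)) ∧
      ∀ κ : Measure ΩX, κ Sᶜ = 0 →
        ∫ u, γ 1 (δ u) ∂κ = ∫ u, γ (s u) (δ x) ∂κ := by
  have loss_eq : ∀ u ∈ S, γ 1 (δ u) = γ (s u) (δ x) := fun u hu =>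
    loss_one_eq_of_eq_smul hγ hδ (hs u hu)
  exact ⟨loss_eq, fun κ hκ =>
    integral_congr_ae (Filter.eventually_of_mem (mem_ae_iff.2 hκ) loss_eq)⟩

/-- The conditional risk of an equivariant rule under an invariant loss is determined by
the fiducial distribution: on the orbit of the observation `x`, the loss at the unit equals
the loss of the action `δ x` against the fiducial variable `s u`, and hence the integrals
agree for any measure concentrated on the orbit. -/
theorem risk_determined_by_fiducial {G ΩX ΩA : Type*} [Group G]
    [MulAction G ΩX] [MulAction G ΩA] [MeasurableSpace ΩX]
    (γ : G → ΩA → ℝ) (δ : ΩX → ΩA)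
    (hγ : ∀ (g θ : G) (a : ΩA), γ (g * θ) (g • a) = γ θ a)
    (hδ : ∀ (g : G) (x : ΩX), δ (g • x) = g • δ x)
    (x : ΩX) (S : Set ΩX) (hS : S = {u : ΩX | ∃ g : G, x = g • u})
    (s : ΩX → G) (hs : ∀ u ∈ S, x = s u • u) :
    (∀ u ∈ S, γ 1 (δ u) = γ (s u) (δ x)) ∧
      ∀ κ : Measure ΩX, κ Sᶜ = 0 →
        ∫ u, γ 1 (δ u) ∂κ = ∫ u, γ (s u) (δ x) ∂κ :=
  risk_determined_by_fiducial_general γ δ hγ hδ x S s hs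
end

section
/- Let G be a set with a binary operation ∗, a two-sided identity e (e ∗ g = g ∗ e = g for all g), and left division: for all x, u ∈ G there is a unique element d(x,u) ∈ G with d(x,u) ∗ u = x. Let γ : G → G → ℝ satisfy the invariance γ(g ∗ θ, g ∗ a) = γ(θ, a) for all g, θ, a ∈ G, and let δ : G → G satisfy the equivariance δ(g ∗ x) = g ∗ δ(x) for all g, x ∈ G. Then (i) γ(θ, δ(θ ∗ u)) = γ(e, δ(u)) for all θ, u ∈ G, and (ii) γ(e, δ(u)) = γ(d(x,u), δ(x)) for all x, u ∈ G. Consequently, for any probability measure μ on G the risk ∫ γ(θ, δ(θ ∗ u)) dμ(u) does not depend on θ and equals ∫ γ(d(x,u), δ(x)) dμ(u) for every x ∈ G, i.e. the risk is determined by the fiducial distribution (the law of u ↦ d(x,u) under μ). -/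
open MeasureTheory

theorem loss_op_equivariant_eq_loss_unit {G : Type*} {op : G → G → G} {e : G}
    (he : ∀ g : G, op g e = g) {γ : G → G → ℝ} {δ : G → G}
    (hγ : ∀ g θ a : G, γ (op g θ) (op g a) = γ θ a)
    (hδ : ∀ g x : G, δ (op g x) = op g (δ x)) (θ u : G) :
    γ θ (δ (op θ u)) = γ e (δ u) := by
  rw [hδ, ← hγ θ e (δ u), he]

theorem quasigroup_risk_fiducial_general {G : Type*} [MeasurableSpace G]
    (op : G → G → G) (e : G) (d : G → G → G)
    (he : ∀ g : G, op e g = g ∧ op g e = g)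
    (hd : ∀ x u : G, op (d x u) u = x)
    (γ : G → G → ℝ) (δ : G → G)
    (hγ : ∀ g θ a : G, γ (op g θ) (op g a) = γ θ a)
    (hδ : ∀ g x : G, δ (op g x) = op g (δ x)) :
    (∀ θ u : G, γ θ (δ (op θ u)) = γ e (δ u)) ∧
    (∀ x u : G, γ e (δ u) = γ (d x u) (δ x)) ∧
    ∀ (μ : Measure G), IsProbabilityMeasure μ →
      ∀ θ x : G, ∫ u, γ θ (δ (op θ u)) ∂μ = ∫ u, γ (d x u) (δ x) ∂μ := by
  have risk_eq := loss_op_equivariant_eq_loss_unit (fun g => (he g).2) hγ hδ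
  -- (ii) is (i) at the fiducial parameter `θ = d x u`, for which `θ ∗ u = x`.
  have fiducial_eq : ∀ x u : G, γ e (δ u) = γ (d x u) (δ x) := fun x u => by
    rw [← risk_eq (d x u) u, hd]
  exact ⟨risk_eq, fiducial_eq, fun μ _ θ x =>
    integral_congr_ae (ae_of_all μ fun u => (risk_eq θ u).trans (fiducial_eq x u))⟩

/-- In a quasigroup (with unit) model, the risk of an equivariant rule under an invariant loss
does not depend on the parameter and is determined by the fiducial distribution, the law of
`u ↦ d x u` where `d x u` is the unique solution `θ` of `θ ∗ u = x`. -/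
theorem quasigroup_risk_fiducial {G : Type*} [MeasurableSpace G]
    (op : G → G → G) (e : G) (d : G → G → G)
    (he : ∀ g : G, op e g = g ∧ op g e = g)
    (hd : ∀ x u : G, op (d x u) u = x)
    (hd_unique : ∀ x u c : G, op c u = x → c = d x u)
    (γ : G → G → ℝ) (δ : G → G)
    (hγ : ∀ g θ a : G, γ (op g θ) (op g a) = γ θ a)
    (hδ : ∀ g x : G, δ (op g x) = op g (δ x)) :
    (∀ θ u : G, γ θ (δ (op θ u)) = γ e (δ u)) ∧
    (∀ x u : G, γ e (δ u) = γ (d x u) (δ x)) ∧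
    ∀ (μ : Measure G), IsProbabilityMeasure μ →
      ∀ θ x : G, ∫ u, γ θ (δ (op θ u)) ∂μ = ∫ u, γ (d x u) (δ x) ∂μ :=
  quasigroup_risk_fiducial_general op e d he hd γ δ hγ hδ
end

section
/- Let U, Θ, X be nonempty sets and let χ : U × Θ → X be a function such that for every fixed θ ∈ Θ the map u ↦ χ(u, θ) is a bijection from U to X, and for every fixed u ∈ U the map θ ↦ χ(u, θ) is a bijection from Θ to X. Fix u₀ ∈ U and θ₀ ∈ Θ and set e = χ(u₀, θ₀). Then there exist bijections f : U → X and h : Θ → X and a binary operation ∗ on X such that: (i) χ(u, θ) = h(θ) ∗ f(u) for all u ∈ U, θ ∈ Θ; (ii) e is a two-sided identity for ∗ (e ∗ x = x ∗ e = x for all x ∈ X); and (iii) for all a, b ∈ X each of the equations a ∗ x = b and x ∗ a = b has a unique solution x ∈ X. That is, after a change of variables, any simple pivotal relation is given by multiplication in a loop (a quasigroup with a unit). -/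
/-!
Use `f = χ(·, θ₀)` and `h = χ(u₀, ·)` as two coordinate systems on `X` and define
`h θ ∗ f u := χ(u, θ)`. Each translation of `∗` is a partial map of `χ` composed with `f⁻¹` or
`h⁻¹`, hence bijective, and `e = χ(u₀, θ₀) = f u₀ = h θ₀` is a unit because
`e ∗ f u = χ(u, θ₀) = f u` and `h θ ∗ e = χ(u₀, θ) = h θ`.
-/

open Function

section SimplePivotal

variable {U Θ X : Type*} {χ : U → Θ → X}
  (hu : ∀ θ, Bijective fun u => χ u θ) (hθ : ∀ u, Bijective fun θ => χ u θ) (u₀ : U) (θ₀ : Θ)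

noncomputable def pivotalMul (a b : X) : X :=
  χ ((Equiv.ofBijective _ (hu θ₀)).symm b) ((Equiv.ofBijective _ (hθ u₀)).symm a)

theorem pivotalMul_apply (u : U) (θ : Θ) : pivotalMul hu hθ u₀ θ₀ (χ u₀ θ) (χ u θ₀) = χ u θ := by
  simp only [pivotalMul, Equiv.ofBijective_symm_apply_apply]

theorem pivotalMul_unit_left (x : X) : pivotalMul hu hθ u₀ θ₀ (χ u₀ θ₀) x = x := by
  obtain ⟨u, rfl⟩ := (hu θ₀).surjective x
  exact pivotalMul_apply hu hθ u₀ θ₀ u θ₀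

theorem pivotalMul_unit_right (x : X) : pivotalMul hu hθ u₀ θ₀ x (χ u₀ θ₀) = x := by
  obtain ⟨θ, rfl⟩ := (hθ u₀).surjective x
  exact pivotalMul_apply hu hθ u₀ θ₀ u₀ θ

theorem pivotalMul_left_bijective (a : X) : Bijective (pivotalMul hu hθ u₀ θ₀ a) :=
  (hu _).comp (Equiv.ofBijective _ (hu θ₀)).symm.bijective

theorem pivotalMul_right_bijective (a : X) : Bijective fun x => pivotalMul hu hθ u₀ θ₀ x a :=
  (hθ _).comp (Equiv.ofBijective _ (hθ u₀)).symm.bijective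

end SimplePivotal

theorem simple_pivotal_is_loop_general {U Θ X : Type*}
    (χ : U → Θ → X)
    (hbij_u : ∀ θ : Θ, Function.Bijective fun u : U => χ u θ)
    (hbij_θ : ∀ u : U, Function.Bijective fun θ : Θ => χ u θ)
    (u₀ : U) (θ₀ : Θ) :
    ∃ (f : U → X) (h : Θ → X) (op : X → X → X),
      Function.Bijective f ∧ Function.Bijective h ∧
      (∀ (u : U) (θ : Θ), χ u θ = op (h θ) (f u)) ∧
      (∀ x : X, op (χ u₀ θ₀) x = x ∧ op x (χ u₀ θ₀) = x) ∧
      (∀ a b : X, ∃! x : X, op a x = b) ∧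
      (∀ a b : X, ∃! x : X, op x a = b) :=
  ⟨fun u => χ u θ₀, fun θ => χ u₀ θ, pivotalMul hbij_u hbij_θ u₀ θ₀, hbij_u θ₀, hbij_θ u₀,
    fun u θ => (pivotalMul_apply hbij_u hbij_θ u₀ θ₀ u θ).symm,
    fun x => ⟨pivotalMul_unit_left hbij_u hbij_θ u₀ θ₀ x,
      pivotalMul_unit_right hbij_u hbij_θ u₀ θ₀ x⟩,
    fun a => (pivotalMul_left_bijective hbij_u hbij_θ u₀ θ₀ a).existsUnique,
    fun a => (pivotalMul_right_bijective hbij_u hbij_θ u₀ θ₀ a).existsUnique⟩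

/-- Any simple pivotal relation is, after a change of variables, given by multiplication in a
loop (a quasigroup with a two-sided unit). -/
theorem simple_pivotal_is_loop {U Θ X : Type*} [Nonempty U] [Nonempty Θ] [Nonempty X]
    (χ : U → Θ → X)
    (hbij_u : ∀ θ : Θ, Function.Bijective fun u : U => χ u θ)
    (hbij_θ : ∀ u : U, Function.Bijective fun θ : Θ => χ u θ)
    (u₀ : U) (θ₀ : Θ) :
    ∃ (f : U → X) (h : Θ → X) (op : X → X → X),
      Function.Bijective f ∧ Function.Bijective h ∧
      (∀ (u : U) (θ : Θ), χ u θ = op (h θ) (f u)) ∧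
      (∀ x : X, op (χ u₀ θ₀) x = x ∧ op x (χ u₀ θ₀) = x) ∧
      (∀ a b : X, ∃! x : X, op a x = b) ∧
      (∀ a b : X, ∃! x : X, op x a = b) :=
  simple_pivotal_is_loop_general χ hbij_u hbij_θ u₀ θ₀
end

section
/- Let n ≥ 1 be an integer and x > 0, and let F be the pushforward of the Gamma(shape n, rate n) distribution under u ↦ x/u (the fiducial distribution of the scale parameter given observed mean x in the exponential model). Then the function a ↦ ∫ (ln θ − ln a)² dF(θ) defined for a ∈ (0, ∞) attains its unique minimum at a = x · exp(ln n − ψ(n)), where ψ is the digamma function. That is, the optimal equivariant estimator of the exponential scale parameter under the loss γ(θ, a) = |ln θ − ln a|² is δ(x) = x · exp(ln n − ψ(n)). -/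
open MeasureTheory ProbabilityTheory Real Set

/-! Under the fiducial law `F`, `log θ = log x - log U`, so `∫ (log θ - log a)² dF` is the
variance of `log θ` plus `(E[log θ] - log a)²`, uniquely minimised at `log a = E[log θ]`.
Rescaling `U ∼ Gamma(n, n)` to `Gamma(n, 1)` and using `Γ'(s) = ∫₀^∞ t^(s-1) log t e^(-t) dt`
gives `E[log U] = ψ(n) - log n`. -/

lemma sq_le_two_mul_exp_add_exp_neg (y : ℝ) : y ^ 2 ≤ 2 * (exp y + exp (-y)) := by
  have h := quadratic_le_exp_of_nonneg (abs_nonneg y)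
  rw [sq_abs] at h
  have : exp |y| ≤ exp y + exp (-y) := by
    rcases abs_cases y with ⟨hy, -⟩ | ⟨hy, -⟩ <;> rw [hy] <;>
      linarith [exp_pos y, exp_pos (-y)]
  linarith [abs_nonneg y]

lemma sq_log_le_rpow_add_rpow_neg {u e : ℝ} (hu : 0 < u) (he : 0 < e) :
    log u ^ 2 ≤ 2 / e ^ 2 * (u ^ e + u ^ (-e)) := by
  have h := sq_le_two_mul_exp_add_exp_neg (log u * e)
  rw [← rpow_def_of_pos hu, ← mul_neg, ← rpow_def_of_pos hu] at h
  rw [div_mul_eq_mul_div, le_div_iff₀ (by positivity)]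
  linarith

namespace Real

theorem hasDerivAt_Gamma_integral {s : ℝ} (hs : 0 < s) :
    HasDerivAt Gamma (∫ t in Ioi 0, t ^ (s - 1) * (log t * exp (-t))) s := by
  have hsc : 0 < (s : ℂ).re := by simpa using hs
  have hint : ∫ t : ℝ in Ioi 0, (t : ℂ) ^ ((s : ℂ) - 1) * (log t * exp (-t))
      = ((∫ t in Ioi 0, t ^ (s - 1) * (log t * exp (-t)) : ℝ) : ℂ) := by
    refine Eq.trans ?_ integral_ofReal
    refine setIntegral_congr_fun measurableSet_Ioi fun t ht => ?_
    rw [← Complex.ofReal_one, ← Complex.ofReal_sub, ← Complex.ofReal_cpow (le_of_lt ht)]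
    norm_cast
  have hΓ : HasDerivAt Complex.Gamma
      ((∫ t in Ioi 0, t ^ (s - 1) * (log t * exp (-t)) : ℝ) : ℂ) s := by
    rw [← hint]
    refine (Complex.hasDerivAt_GammaIntegral hsc).congr_of_eventuallyEq ?_
    filter_upwards [(isOpen_lt continuous_const Complex.continuous_re).mem_nhds hsc] with z hz
    exact Complex.Gamma_eq_integral hz
  simpa [Complex.Gamma_ofReal] using hΓ.real_of_complex

theorem deriv_log_Gamma {s : ℝ} (hs : 0 < s) :
    deriv (fun t => log (Gamma t)) s
      = (∫ t in Ioi 0, t ^ (s - 1) * (log t * exp (-t))) / Gamma s :=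
  ((hasDerivAt_Gamma_integral hs).log (Gamma_pos_of_pos hs).ne').deriv

end Real

namespace ProbabilityTheory

variable {a r : ℝ}

lemma gammaMeasure_eq_withDensity_Ioi (a r : ℝ) :
    gammaMeasure a r = (volume.restrict (Ioi 0)).withDensity
      fun u => ENNReal.ofReal (r ^ a / Gamma a * u ^ (a - 1) * exp (-(r * u))) := by
  rw [gammaMeasure, ← withDensity_indicator measurableSet_Ioi]
  refine withDensity_congr_ae ?_
  filter_upwards [compl_mem_ae_iff.mpr (measure_singleton (0 : ℝ))] with u hu
  rcases lt_or_gt_of_ne hu with hneg | hpos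
  · simp [gammaPDF_of_neg hneg, hneg.not_gt]
  · simp [gammaPDF_of_nonneg hpos.le, hpos]

lemma ae_pos_gammaMeasure (a r : ℝ) : ∀ᵐ u ∂gammaMeasure a r, 0 < u := by
  rw [gammaMeasure_eq_withDensity_Ioi]
  exact (withDensity_absolutelyContinuous _ _).ae_le (ae_restrict_mem measurableSet_Ioi)

lemma integral_gammaMeasure (ha : 0 < a) (hr : 0 < r) (g : ℝ → ℝ) :
    ∫ u, g u ∂gammaMeasure a r
      = ∫ u in Ioi 0, r ^ a / Gamma a * u ^ (a - 1) * exp (-(r * u)) * g u := by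
  rw [gammaMeasure_eq_withDensity_Ioi,
    integral_withDensity_eq_integral_toReal_smul (by fun_prop)
      (ae_of_all _ fun _ => ENNReal.ofReal_lt_top)]
  refine setIntegral_congr_fun measurableSet_Ioi fun u hu => ?_
  have : 0 < u := hu
  rw [ENNReal.toReal_ofReal (by have := Gamma_pos_of_pos ha; positivity), smul_eq_mul]

lemma integrable_gammaMeasure_iff (ha : 0 < a) (hr : 0 < r) {g : ℝ → ℝ} :
    Integrable g (gammaMeasure a r) ↔
      IntegrableOn (fun u => r ^ a / Gamma a * u ^ (a - 1) * exp (-(r * u)) * g u) (Ioi 0) := by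
  rw [gammaMeasure_eq_withDensity_Ioi,
    integrable_withDensity_iff_integrable_smul' (by fun_prop)
      (ae_of_all _ fun _ => ENNReal.ofReal_lt_top)]
  refine integrableOn_congr_fun (fun u hu => ?_) measurableSet_Ioi
  have : 0 < u := hu
  rw [ENNReal.toReal_ofReal (by have := Gamma_pos_of_pos ha; positivity), smul_eq_mul]

lemma integral_gammaMeasure_comp_div (ha : 0 < a) (hr : 0 < r) (g : ℝ → ℝ) :
    ∫ u, g u ∂gammaMeasure a r = ∫ t, g (t / r) ∂gammaMeasure a 1 := by
  set f : ℝ → ℝ := fun t => 1 ^ a / Gamma a * t ^ (a - 1) * exp (-(1 * t)) * g (t / r)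
  calc ∫ u, g u ∂gammaMeasure a r
      = ∫ u in Ioi 0, r * f (r * u) := by
        rw [integral_gammaMeasure ha hr]
        refine setIntegral_congr_fun measurableSet_Ioi fun u hu => ?_
        have hu : 0 < u := hu
        simp only [f, one_rpow, one_mul, mul_div_cancel_left₀ _ hr.ne']
        rw [mul_rpow hr.le hu.le, rpow_sub_one hr.ne']
        field_simp
    _ = r⁻¹ • ∫ t in Ioi (r * 0), r * f t := integral_comp_mul_left_Ioi (fun t => r * f t) 0 hr
    _ = ∫ t, g (t / r) ∂gammaMeasure a 1 := by
        rw [mul_zero, integral_const_mul, smul_eq_mul, inv_mul_cancel_left₀ hr.ne',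
          integral_gammaMeasure ha one_pos]

lemma integrable_rpow_gammaMeasure (ha : 0 < a) (hr : 0 < r) {p : ℝ} (hp : -a < p) :
    Integrable (fun u => u ^ p) (gammaMeasure a r) := by
  rw [integrable_gammaMeasure_iff ha hr]
  refine IntegrableOn.congr_fun ((integrableOn_rpow_mul_exp_neg_mul_rpow (s := a - 1 + p)
    (by linarith) one_pos hr).const_mul (r ^ a / Gamma a)) (fun u hu => ?_) measurableSet_Ioi
  have hu : 0 < u := hu
  rw [rpow_one, rpow_add hu, neg_mul]
  ring

lemma memLp_log_gammaMeasure (ha : 0 < a) (hr : 0 < r) : MemLp log 2 (gammaMeasure a r) := by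
  rw [memLp_two_iff_integrable_sq measurable_log.aestronglyMeasurable]
  have hbound : Integrable (fun u => 2 / (a / 2) ^ 2 * (u ^ (a / 2) + u ^ (-(a / 2))))
      (gammaMeasure a r) :=
    ((integrable_rpow_gammaMeasure ha hr (by linarith)).add
      (integrable_rpow_gammaMeasure ha hr (by linarith))).const_mul _
  refine hbound.mono' (by fun_prop) ?_
  filter_upwards [ae_pos_gammaMeasure a r] with u hu
  rw [norm_of_nonneg (sq_nonneg _)]
  exact sq_log_le_rpow_add_rpow_neg hu (half_pos ha)

lemma integral_log_gammaMeasure_one (ha : 0 < a) :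
    ∫ u, log u ∂gammaMeasure a 1 = deriv (fun t => log (Gamma t)) a := by
  rw [integral_gammaMeasure ha one_pos, deriv_log_Gamma ha, ← integral_div]
  refine setIntegral_congr_fun measurableSet_Ioi fun u _ => ?_
  simp only [one_rpow, one_mul]
  ring

lemma integral_log_gammaMeasure (ha : 0 < a) (hr : 0 < r) :
    ∫ u, log u ∂gammaMeasure a r = deriv (fun t => log (Gamma t)) a - log r := by
  have := isProbabilityMeasure_gammaMeasure ha one_pos
  have hlog : ∀ᵐ t ∂gammaMeasure a 1, log (t / r) = log t - log r :=
    (ae_pos_gammaMeasure a 1).mono fun t ht => log_div ht.ne' hr.ne'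
  rw [integral_gammaMeasure_comp_div ha hr, integral_congr_ae hlog,
    integral_sub ((memLp_log_gammaMeasure ha one_pos).integrable one_le_two) (integrable_const _),
    integral_const, probReal_univ, integral_log_gammaMeasure_one ha, one_smul]

end ProbabilityTheory

section BiasVariance

variable {Ω : Type*} [MeasurableSpace Ω] {μ : Measure Ω} [IsProbabilityMeasure μ] {X : Ω → ℝ}

lemma integral_sub_const_sq (hX : MemLp X 2 μ) (c : ℝ) :
    ∫ ω, (X ω - c) ^ 2 ∂μ = Var[X; μ] + (μ[X] - c) ^ 2 := by
  have hXc : MemLp (fun ω => X ω - c) 2 μ := hX.sub (memLp_const c)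
  have h := variance_eq_sub hXc
  rw [variance_sub_const hX.aestronglyMeasurable,
    integral_sub (hX.integrable one_le_two) (integrable_const c), integral_const, probReal_univ,
    one_smul] at h
  simp only [Pi.pow_apply] at h
  linarith

lemma integral_sub_integral_sq_lt_of_ne (hX : MemLp X 2 μ) {c : ℝ} (hc : c ≠ μ[X]) :
    ∫ ω, (X ω - μ[X]) ^ 2 ∂μ < ∫ ω, (X ω - c) ^ 2 ∂μ := by
  rw [integral_sub_const_sq hX, integral_sub_const_sq hX, sub_self]
  have : 0 < (μ[X] - c) ^ 2 := sq_pos_of_ne_zero (sub_ne_zero.2 hc.symm)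
  linarith

end BiasVariance

lemma memLp_log_map_div {μ : Measure ℝ} [IsFiniteMeasure μ] {x : ℝ} (hx : x ≠ 0)
    (hμ : ∀ᵐ u ∂μ, u ≠ 0) (h : MemLp log 2 μ) : MemLp log 2 (μ.map (x / ·)) := by
  rw [memLp_map_measure_iff measurable_log.aestronglyMeasurable (by fun_prop)]
  refine ((memLp_const (log x)).sub h).ae_eq ?_
  filter_upwards [hμ] with u hu
  simp [log_div hx hu]

lemma integral_log_map_div {μ : Measure ℝ} [IsProbabilityMeasure μ] {x : ℝ} (hx : x ≠ 0)
    (hμ : ∀ᵐ u ∂μ, u ≠ 0) (h : Integrable log μ) :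
    ∫ θ, log θ ∂μ.map (x / ·) = log x - ∫ u, log u ∂μ := by
  have hlog : ∀ᵐ u ∂μ, log (x / u) = log x - log u := hμ.mono fun u hu => log_div hx hu
  rw [integral_map (by fun_prop) measurable_log.aestronglyMeasurable, integral_congr_ae hlog,
    integral_sub (integrable_const _) h, integral_const, probReal_univ, one_smul]

/-- The optimal equivariant estimator of the exponential scale parameter under the loss
`γ(θ, a) = |ln θ - ln a|²` is `δ(x) = x · exp(ln n - ψ(n))`: the expected fiducial loss
`a ↦ ∫ (ln θ - ln a)² dF(θ)`, where `F` is the fiducial distribution (the law of `x / U` with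
`U ∼ Gamma(shape n, rate n)`), attains its unique minimum on `(0, ∞)` at this point. -/
theorem optimal_estimator_exponential_scale (n : ℕ) (hn : 1 ≤ n) (x : ℝ) (hx : 0 < x) :
    ∀ F : Measure ℝ, F = Measure.map (fun u : ℝ => x / u) (gammaMeasure n n) →
    ∀ d : ℝ, d = x * Real.exp (Real.log n - deriv (fun t : ℝ => Real.log (Real.Gamma t)) n) →
      d ∈ Set.Ioi (0 : ℝ) ∧
      ∀ a ∈ Set.Ioi (0 : ℝ), a ≠ d →
        ∫ θ, (Real.log θ - Real.log d) ^ 2 ∂F < ∫ θ, (Real.log θ - Real.log a) ^ 2 ∂F := by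
  intro F hF d hd
  have hn0 : (0 : ℝ) < n := by exact_mod_cast hn
  have := isProbabilityMeasure_gammaMeasure hn0 hn0
  have hne : ∀ᵐ u ∂gammaMeasure n n, u ≠ 0 := (ae_pos_gammaMeasure _ _).mono fun _ hu => hu.ne'
  have hlog := memLp_log_gammaMeasure hn0 hn0
  have hd0 : 0 < d := hd ▸ by positivity
  have hmean : ∫ θ, log θ ∂F = log d := by
    rw [hF, integral_log_map_div hx.ne' hne (hlog.integrable one_le_two),
      integral_log_gammaMeasure hn0 hn0, hd, log_mul hx.ne' (exp_pos _).ne', log_exp]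
    ring
  refine ⟨hd0, fun a ha had => ?_⟩
  have hlog_ne : log a ≠ log d := fun h => had (log_injOn_pos ha hd0 h)
  have : IsProbabilityMeasure F := hF ▸ Measure.isProbabilityMeasure_map (by fun_prop)
  rw [← hmean] at hlog_ne ⊢
  exact integral_sub_integral_sq_lt_of_ne (hF ▸ memLp_log_map_div hx.ne' hne hlog) hlog_ne
end

section
/- Let c : ℝ → L²(ℝ) be the curve c(θ) = 1_{(θ,θ+1)} (the equivalence class of the indicator of (θ, θ+1)). Then for all real θ₁ < θ₂ and every positive integer n, the total variation (length) of c on the interval [θ₁, θ₂] is at least 2√n · √(θ₂ − θ₁); consequently the length of c on [θ₁, θ₂] is infinite (the variation equals +∞), even though c is continuous. -/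
/-! Two unit intervals at distance `d ≤ 1` overlap in length `1 - d`, so
`‖c t - c s‖ = √(2 |t - s|)` for `|t - s| ≤ 1`. This gives continuity, while cutting `[θ₁, θ₂]`
into `m` equal pieces shows that the variation is at least `m √(2Δ/m) = √(2 m Δ)`, which is
unbounded in `m`. -/

open MeasureTheory Filter Topology Set

theorem MeasureTheory.L2.inner_eq_measureReal_inter_of_ae_eq_indicator
    {α : Type*} [MeasurableSpace α] {μ : Measure α} {A B : Set α}
    (hA : MeasurableSet A) (hB : MeasurableSet B) {f g : Lp ℝ 2 μ}
    (hf : (f : α → ℝ) =ᵐ[μ] A.indicator 1) (hg : (g : α → ℝ) =ᵐ[μ] B.indicator 1) :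
    inner ℝ f g = μ.real (A ∩ B) := by
  rw [L2.inner_def, ← integral_indicator_one (hA.inter hB)]
  refine integral_congr_ae ?_
  filter_upwards [hf, hg] with x hfx hgx
  rw [RCLike.inner_apply, hfx, hgx, conj_trivial, inter_indicator_one, Pi.mul_apply, mul_comm]

theorem eVariationOn.sum_edist_arithmetic_le {E : Type*} [PseudoEMetricSpace E] (f : ℝ → E)
    {a h : ℝ} (hh : 0 ≤ h) (m : ℕ) :
    ∑ i ∈ Finset.range m, edist (f (a + (i + 1 : ℕ) * h)) (f (a + i * h)) ≤
      eVariationOn f (Icc a (a + m * h)) := by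
  refine eVariationOn.sum_le_of_monotoneOn_Iic (u := fun i : ℕ => a + i * h)
    (fun i _ j _ hij => ?_) fun i hi => ⟨?_, ?_⟩
  · show a + i * h ≤ a + j * h
    gcongr
  · have : (0 : ℝ) ≤ i * h := by positivity
    linarith
  · show a + i * h ≤ a + m * h
    gcongr

theorem dist_eq_sqrt_of_ae_eq_indicator_Ioo (c : ℝ → Lp ℝ 2 (volume : Measure ℝ))
    (hc : ∀ θ : ℝ, (c θ : ℝ → ℝ) =ᵐ[volume] (Ioo θ (θ + 1)).indicator fun _ => (1 : ℝ))
    {s t : ℝ} (hst : |t - s| ≤ 1) :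
    dist (c s) (c t) = √(2 * |t - s|) := by
  wlog hle : s ≤ t generalizing s t
  · rw [dist_comm, abs_sub_comm]
    exact this (by rwa [abs_sub_comm]) (by linarith)
  have inner_eq (a b : ℝ) : inner ℝ (c a) (c b) = volume.real (Ioo a (a + 1) ∩ Ioo b (b + 1)) :=
    L2.inner_eq_measureReal_inter_of_ae_eq_indicator measurableSet_Ioo measurableSet_Ioo
      (hc a) (hc b)
  rw [abs_of_nonneg (sub_nonneg.2 hle)] at hst ⊢
  have hsq : dist (c s) (c t) ^ 2 = 2 * (t - s) := by
    rw [dist_eq_norm, norm_sub_sq_real, ← real_inner_self_eq_norm_sq,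
      ← real_inner_self_eq_norm_sq, inner_eq, inner_eq, inner_eq, inter_self, inter_self,
      Ioo_inter_Ioo, max_eq_right hle, min_eq_left (by linarith), Real.volume_real_Ioo_of_le,
      Real.volume_real_Ioo_of_le, Real.volume_real_Ioo_of_le] <;> linarith
  rw [← hsq, Real.sqrt_sq dist_nonneg]

theorem ofReal_sqrt_le_eVariationOn_of_ae_eq_indicator_Ioo
    (c : ℝ → Lp ℝ 2 (volume : Measure ℝ))
    (hc : ∀ θ : ℝ, (c θ : ℝ → ℝ) =ᵐ[volume] (Ioo θ (θ + 1)).indicator fun _ => (1 : ℝ))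
    {a b : ℝ} (hab : a ≤ b) {m : ℕ} (hm : 0 < m) (hbm : b - a ≤ m) :
    ENNReal.ofReal √(2 * m * (b - a)) ≤ eVariationOn c (Icc a b) := by
  set h := (b - a) / m
  have hh : 0 ≤ h := by positivity
  have hh1 : h ≤ 1 := div_le_one_of_le₀ hbm m.cast_nonneg
  have hmh : m * h = b - a := mul_div_cancel₀ _ (by positivity)
  have hstep (i : ℕ) :
      edist (c (a + (i + 1 : ℕ) * h)) (c (a + i * h)) = ENNReal.ofReal √(2 * h) := by
    have hdiff : a + (i + 1 : ℕ) * h - (a + i * h) = h := by push_cast; ring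
    rw [edist_dist, dist_comm, dist_eq_sqrt_of_ae_eq_indicator_Ioo c hc, hdiff, abs_of_nonneg hh]
    rwa [hdiff, abs_of_nonneg hh]
  have hsum := eVariationOn.sum_edist_arithmetic_le c (a := a) hh m
  rw [show a + m * h = b by linarith] at hsum
  simp only [hstep, Finset.sum_const, Finset.card_range, nsmul_eq_mul] at hsum
  calc ENNReal.ofReal √(2 * m * (b - a)) = m * ENNReal.ofReal √(2 * h) := by
        rw [← ENNReal.ofReal_natCast, ← ENNReal.ofReal_mul m.cast_nonneg,
          show 2 * m * (b - a) = m ^ 2 * (2 * h) by rw [← hmh]; ring,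
          Real.sqrt_mul (by positivity), Real.sqrt_sq m.cast_nonneg]
    _ ≤ eVariationOn c (Icc a b) := hsum

/-- The curve `θ ↦ 1_{(θ,θ+1)}` in `L²(ℝ)` is continuous, but on any interval `[θ₁, θ₂]` its
length (total variation) is at least `2 √n √(θ₂ - θ₁)` for every positive integer `n`, hence
infinite. -/
theorem uniform_location_curve_infinite_length
    (c : ℝ → Lp ℝ 2 (volume : Measure ℝ))
    (hc : ∀ θ : ℝ, (c θ : ℝ → ℝ) =ᵐ[volume]
      (Set.Ioo θ (θ + 1)).indicator fun _ => (1 : ℝ)) :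
    Continuous c ∧
      ∀ θ₁ θ₂ : ℝ, θ₁ < θ₂ →
        (∀ n : ℕ, 0 < n →
          ENNReal.ofReal (2 * Real.sqrt n * Real.sqrt (θ₂ - θ₁)) ≤
            eVariationOn c (Set.Icc θ₁ θ₂)) ∧
        eVariationOn c (Set.Icc θ₁ θ₂) = ⊤ := by
  refine ⟨continuous_iff_continuousAt.2 fun s => ?_, fun θ₁ θ₂ hθ => ?_⟩
  · rw [ContinuousAt, tendsto_iff_dist_tendsto_zero]
    have hlim : Tendsto (fun t => √(2 * |t - s|)) (𝓝 s) (𝓝 0) := by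
      simpa using (show Continuous fun t : ℝ => √(2 * |t - s|) by fun_prop).tendsto s
    refine hlim.congr' ?_
    filter_upwards [Metric.closedBall_mem_nhds s one_pos] with t ht
    rw [dist_comm, dist_eq_sqrt_of_ae_eq_indicator_Ioo c hc ht]
  set Δ := θ₂ - θ₁
  have hlow (n : ℕ) (hn : 0 < n) :
      ENNReal.ofReal (2 * √n * √Δ) ≤ eVariationOn c (Icc θ₁ θ₂) := by
    have hΔ := Nat.le_ceil Δ
    refine le_trans (ENNReal.ofReal_le_ofReal ?_)
      (ofReal_sqrt_le_eVariationOn_of_ae_eq_indicator_Ioo c hc hθ.le (m := 2 * n + ⌈Δ⌉₊)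
        (by positivity) (by push_cast; linarith))
    rw [Real.le_sqrt (by positivity) (by positivity), mul_pow, mul_pow,
      Real.sq_sqrt n.cast_nonneg, Real.sq_sqrt (by linarith)]
    push_cast
    nlinarith
  refine ⟨hlow, top_unique (le_of_tendsto ?_ ((eventually_gt_atTop 0).mono hlow))⟩
  have hsqrt : Tendsto (fun n : ℕ => √(n : ℝ)) atTop atTop :=
    Real.tendsto_sqrt_atTop.comp tendsto_natCast_atTop_atTop
  exact ENNReal.tendsto_ofReal_atTop.comp
    ((hsqrt.const_mul_atTop two_pos).atTop_mul_const (Real.sqrt_pos.2 (sub_pos.2 hθ)))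
end

section
/- Let n ≥ 1 be an integer and x > 0. Consider the Bayesian posterior for the exponential scale parameter β from the right Haar prior dβ/β given the observed mean x, i.e. the probability measure on (0, ∞) with density proportional to β ↦ β^{−1} · ((n/β)^n / Γ(n)) · x^{n−1} e^{−n x / β} (prior density 1/β times the Gamma(shape n, rate n/β) likelihood of x). This posterior equals the fiducial distribution: the pushforward of the Gamma distribution with shape n and rate n under the map u ↦ x/u, namely the inverse-gamma distribution with density β ↦ ((n x)^n / Γ(n)) β^{−n−1} e^{−n x / β}. -/
/-!
The inversion `u ↦ x / u` is a diffeomorphism of `(0, ∞)` with Jacobian `x / β²`, so the law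
of `x / U` for `U ∼ Gamma(a, r)` has the inverse-gamma density
`(r x)^a / Γ(a) · β^(-a-1) e^(-r x / β)`.
Prior `1/β` times the `Gamma(n, n/β)` likelihood of `x` is `x⁻¹` times this same density (with
`a = r = n`), so normalizing it gives the fiducial law; the normalizing constant is `x⁻¹` because
the fiducial law, as an image of a probability measure, has total mass one.
-/

open MeasureTheory ProbabilityTheory

namespace ProbabilityTheory

open Real Set
open scoped ENNReal

noncomputable def invGammaPDFReal (a b β : ℝ) : ℝ :=
  if 0 < β then b ^ a / Gamma a * β ^ (-a - 1) * exp (-b / β) else 0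

lemma measurable_invGammaPDFReal (a b : ℝ) : Measurable (invGammaPDFReal a b) :=
  Measurable.ite measurableSet_Ioi (by fun_prop) measurable_const

lemma invGammaPDFReal_nonneg {a b : ℝ} (ha : 0 < a) (hb : 0 ≤ b) (β : ℝ) :
    0 ≤ invGammaPDFReal a b β := by
  unfold invGammaPDFReal
  split_ifs <;> positivity

lemma invGammaPDFReal_of_nonpos {a b β : ℝ} (hβ : β ≤ 0) : invGammaPDFReal a b β = 0 :=
  if_neg hβ.not_gt

lemma div_sq_mul_gammaPDFReal_div {a r c β : ℝ} (hr : 0 ≤ r) (hc : 0 < c) (hβ : 0 < β) :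
    c / β ^ 2 * gammaPDFReal a r (c / β) = invGammaPDFReal a (r * c) β := by
  rw [gammaPDFReal, if_pos (div_pos hc hβ).le, invGammaPDFReal, if_pos hβ,
    mul_rpow hr hc.le, rpow_sub_one hβ.ne', rpow_neg hβ.le, div_rpow hc.le hβ.le,
    rpow_sub_one hc.ne', rpow_sub_one hβ.ne']
  field_simp

lemma map_const_div_withDensity_restrict_Ioi {c : ℝ} (hc : 0 < c) (f : ℝ → ℝ≥0∞) :
    ((volume.restrict (Ioi 0)).withDensity f).map (c / ·) =
      (volume.restrict (Ioi 0)).withDensity fun β ↦ ENNReal.ofReal (c / β ^ 2) * f (c / β) := by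
  have hmeas : Measurable (c / · : ℝ → ℝ) := by fun_prop
  have himage : ∀ s : Set ℝ, (c / ·) ⁻¹' s ∩ Ioi 0 = (c / ·) '' (s ∩ Ioi 0) := by
    intro s
    ext u
    constructor
    · rintro ⟨hus, hu : 0 < u⟩
      exact ⟨c / u, ⟨hus, div_pos hc hu⟩, div_div_cancel₀ hc.ne'⟩
    · rintro ⟨β, ⟨hβs, hβ : 0 < β⟩, rfl⟩
      exact ⟨by simpa [div_div_cancel₀ hc.ne'] using hβs, div_pos hc hβ⟩
  have hderiv : ∀ β ∈ Ioi (0 : ℝ), HasDerivAt (c / ·) (-(c / β ^ 2)) β := fun β hβ ↦ by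
    simpa [div_eq_mul_inv] using (hasDerivAt_inv (ne_of_gt hβ)).const_mul c
  have hinj : InjOn (c / · : ℝ → ℝ) (Ioi 0) := fun u _ v _ huv ↦ by
    simpa [div_div_cancel₀ hc.ne'] using congrArg (c / ·) huv
  ext s hs
  have hs' : MeasurableSet (s ∩ Ioi 0) := hs.inter measurableSet_Ioi
  rw [Measure.map_apply hmeas hs, withDensity_apply _ (hmeas hs), withDensity_apply _ hs,
    Measure.restrict_restrict (hmeas hs), Measure.restrict_restrict hs, himage,
    lintegral_image_eq_lintegral_abs_deriv_mul hs'
      (fun β hβ ↦ (hderiv β hβ.2).hasDerivWithinAt) (hinj.mono inter_subset_right)]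
  refine setLIntegral_congr_fun hs' fun β hβ ↦ ?_
  rw [abs_neg, abs_of_pos (div_pos hc (pow_pos hβ.2 2))]

lemma gammaMeasure_eq_withDensity_restrict_Ioi (a r : ℝ) :
    gammaMeasure a r = (volume.restrict (Ioi 0)).withDensity (gammaPDF a r) := by
  rw [gammaMeasure, ← withDensity_indicator measurableSet_Ioi]
  refine withDensity_congr_ae ?_
  filter_upwards [Measure.ae_ne volume 0] with u hu
  rcases hu.lt_or_gt with hneg | hpos
  · rw [gammaPDF_of_neg hneg, indicator_of_notMem (notMem_Ioi.mpr hneg.le)]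
  · rw [indicator_of_mem (mem_Ioi.mpr hpos)]

lemma map_const_div_gammaMeasure {a r c : ℝ} (hr : 0 ≤ r) (hc : 0 < c) :
    (gammaMeasure a r).map (c / ·) =
      volume.withDensity fun β ↦ ENNReal.ofReal (invGammaPDFReal a (r * c) β) := by
  rw [gammaMeasure_eq_withDensity_restrict_Ioi, map_const_div_withDensity_restrict_Ioi hc,
    ← withDensity_indicator measurableSet_Ioi]
  congr 1
  funext β
  by_cases hβ : 0 < β
  · rw [indicator_of_mem (mem_Ioi.mpr hβ), gammaPDF,
      ← ENNReal.ofReal_mul (div_pos hc (pow_pos hβ 2)).le, div_sq_mul_gammaPDFReal_div hr hc hβ]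
  · rw [indicator_of_notMem (mt mem_Ioi.mp hβ), invGammaPDFReal_of_nonpos (not_lt.mp hβ),
      ENNReal.ofReal_zero]

lemma integral_invGammaPDFReal_eq_one {a b : ℝ} (ha : 0 < a) (hb : 0 < b) :
    ∫ β, invGammaPDFReal a b β = 1 := by
  have hprob : IsProbabilityMeasure ((gammaMeasure a 1).map (b / ·)) :=
    haveI := isProbabilityMeasure_gammaMeasure ha one_pos
    Measure.isProbabilityMeasure_map (by fun_prop)
  rw [map_const_div_gammaMeasure zero_le_one hb, one_mul] at hprob
  rw [integral_eq_lintegral_of_nonneg_ae (ae_of_all _ (invGammaPDFReal_nonneg ha hb.le))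
    (measurable_invGammaPDFReal a b).aestronglyMeasurable]
  have hmass := hprob.measure_univ
  rw [withDensity_apply _ MeasurableSet.univ, Measure.restrict_univ] at hmass
  rw [hmass, ENNReal.toReal_one]

lemma inv_mul_gammaLikelihood_eq {a x β : ℝ} (ha : 0 ≤ a) (hx : 0 < x) (hβ : 0 < β) :
    β⁻¹ * ((a / β) ^ a / Gamma a * x ^ (a - 1) * exp (-(a * x) / β)) =
      x⁻¹ * invGammaPDFReal a (a * x) β := by
  rw [invGammaPDFReal, if_pos hβ, mul_rpow ha hx.le, div_rpow ha hβ.le, rpow_sub_one hx.ne',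
    rpow_sub_one hβ.ne', rpow_neg hβ.le]
  field_simp

end ProbabilityTheory

/-- The Bayesian posterior for the exponential scale parameter `β` from the right Haar prior
`dβ/β`, given the observed mean `x` of a sample of size `n`, equals the fiducial
distribution: the law of `x / U` with `U ∼ Gamma(shape n, rate n)`, i.e. the inverse-gamma
distribution with shape `n` and scale `n x`. -/
theorem haar_posterior_eq_fiducial_exponential (n : ℕ) (hn : 1 ≤ n) (x : ℝ) (hx : 0 < x)
    (g : ℝ → ℝ)
    (hg : g = fun β : ℝ =>
      if 0 < β then
        β⁻¹ * ((n / β) ^ (n : ℝ) / Real.Gamma n * x ^ ((n : ℝ) - 1) * Real.exp (-(n * x) / β))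
      else 0)
    (posterior : Measure ℝ)
    (hposterior : posterior =
      volume.withDensity fun β : ℝ => ENNReal.ofReal (g β / ∫ b in Set.Ioi (0 : ℝ), g b)) :
    posterior = Measure.map (fun u : ℝ => x / u) (gammaMeasure n n) ∧
      Measure.map (fun u : ℝ => x / u) (gammaMeasure n n) =
        volume.withDensity fun β : ℝ =>
          if 0 < β then
            ENNReal.ofReal ((n * x) ^ (n : ℝ) / Real.Gamma n *
              β ^ (-(n : ℝ) - 1) * Real.exp (-(n * x) / β))
          else 0 := by
  have hn₀ : (0 : ℝ) < n := by exact_mod_cast hn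
  have hfiducial := map_const_div_gammaMeasure (a := n) hn₀.le hx
  have hg' : g = fun β ↦ x⁻¹ * invGammaPDFReal n (n * x) β := by
    subst hg
    funext β
    split_ifs with hβ
    · exact inv_mul_gammaLikelihood_eq hn₀.le hx hβ
    · rw [invGammaPDFReal_of_nonpos (not_lt.mp hβ), mul_zero]
  have hevidence : ∫ b in Set.Ioi (0 : ℝ), g b = x⁻¹ := by
    rw [hg', integral_const_mul, setIntegral_eq_integral_of_forall_compl_eq_zero
      fun β (hβ : β ∉ Set.Ioi 0) ↦ invGammaPDFReal_of_nonpos (not_lt.mp hβ),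
      integral_invGammaPDFReal_eq_one hn₀ (mul_pos hn₀ hx), mul_one]
  refine ⟨?_, ?_⟩
  · simp_rw [hposterior, hfiducial, hevidence, hg', mul_div_cancel_left₀ _ (inv_ne_zero hx.ne')]
  · rw [hfiducial]
    congr 1
    funext β
    unfold invGammaPDFReal
    split_ifs <;> simp
end
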